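/- arXiv:2507.19177 — 3 statements merged into one kernel-verified Lean document; each statement's English description precedes it below -/
import Mathlib

section
/- Let R^{ub}(ν) = ∫_{νσ^2}^∞ [log(1 + λ/σ^2) − log(1 + ν)] · λ e^{−λ} dλ, and suppose ν = ν(σ) is chosen so that ∫_{νσ^2}^∞ log(λ/(νσ^2)) · λ e^{−λ} dλ = C_tot for a fixed constant C_tot > 0. Then R^{ub}(ν(σ)) → C_tot as σ → 0. -/
open MeasureTheory Real Set Filter

/-- Generic integrability via exponential decay bound. -/
lemma my_exp_decay_int {a c : ℝ} {f : ℝ → ℝ} (hf : ContinuousOn f (Ioi a))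
    (hb : ∀ x ∈ Ioi a, |f x| ≤ c * Real.exp (-(1/2) * x)) :
    IntegrableOn f (Ioi a) := by
  refine Integrable.mono'
    ((exp_neg_integrableOn_Ioi a (by norm_num : (0:ℝ) < 1/2)).const_mul c)
    (hf.aestronglyMeasurable measurableSet_Ioi) ?_
  filter_upwards [ae_restrict_mem measurableSet_Ioi] with x hx
  simpa [Real.norm_eq_abs] using hb x hx

lemma my_wle {x : ℝ} (hx : 0 ≤ x) :
    x * Real.exp (-x) ≤ 2 * Real.exp (-(1/2) * x) := by
  have h1 : x ≤ 2 * Real.exp ((1/2) * x) := by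
    have := Real.add_one_le_exp ((1/2) * x)
    nlinarith
  have h2 : Real.exp ((1/2) * x) * Real.exp (-x) = Real.exp (-(1/2) * x) := by
    rw [← Real.exp_add]; ring_nf
  nlinarith [Real.exp_pos (-x), Real.exp_pos ((1/2)*x)]

lemma my_wsq {x : ℝ} (hx : 0 ≤ x) :
    x^2 * Real.exp (-x) ≤ 16 * Real.exp (-(1/2) * x) := by
  have h1 : x ≤ 4 * Real.exp ((1/4) * x) := by
    have := Real.add_one_le_exp ((1/4) * x)
    nlinarith
  have he : Real.exp ((1/4)*x) * Real.exp ((1/4)*x) = Real.exp ((1/2)*x) := by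
    rw [← Real.exp_add]; ring_nf
  have h2 : x^2 ≤ 16 * Real.exp ((1/2) * x) := by
    nlinarith [Real.exp_pos ((1/4)*x)]
  have h3 : Real.exp ((1/2) * x) * Real.exp (-x) = Real.exp (-(1/2) * x) := by
    rw [← Real.exp_add]; ring_nf
  nlinarith [Real.exp_pos (-x)]

lemma my_w_int {b : ℝ} (hb : 0 ≤ b) :
    IntegrableOn (fun x => x * Real.exp (-x)) (Ioi b) := by
  refine my_exp_decay_int (c := 2) (by fun_prop) (fun x _hx => ?_)
  have hx0 : 0 ≤ x := hb.trans (le_of_lt _hx)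
  rw [abs_of_nonneg (mul_nonneg hx0 (Real.exp_pos _).le)]
  exact my_wle hx0

lemma my_w_le_one {b : ℝ} (hb : 0 ≤ b) :
    (∫ x in Ioi b, x * Real.exp (-x)) ≤ 1 := by
  have h0 : (∫ x in Ioi (0:ℝ), x * Real.exp (-x)) = 1 := by
    have hg := Real.Gamma_eq_integral (by norm_num : (0:ℝ) < 2)
    rw [Real.Gamma_two] at hg
    rw [show (∫ x in Ioi (0:ℝ), x * Real.exp (-x))
        = ∫ x in Ioi (0:ℝ), Real.exp (-x) * x ^ ((2:ℝ) - 1) from ?_, ← hg]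
    refine setIntegral_congr_fun measurableSet_Ioi (fun x hx => ?_)
    rw [show (2:ℝ) - 1 = 1 by norm_num, Real.rpow_one, mul_comm]
  rw [← h0]
  refine setIntegral_mono_set (my_w_int le_rfl) ?_ ((Ioi_subset_Ioi hb).eventuallyLE)
  filter_upwards [ae_restrict_mem measurableSet_Ioi] with x hx
  exact mul_nonneg (le_of_lt hx) (Real.exp_pos _).le

lemma my_log_abs_le {a x : ℝ} (ha : 0 < a) (hx : a < x) :
    |Real.log x| ≤ |Real.log a| + x := by
  have hx0 : 0 < x := ha.trans hx
  rcases le_or_gt 1 x with h1 | h1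
  · rw [abs_of_nonneg (Real.log_nonneg h1)]
    have := Real.log_le_sub_one_of_pos hx0
    have := abs_nonneg (Real.log a)
    linarith
  · have hlx : Real.log x < 0 := Real.log_neg hx0 h1
    rw [abs_of_neg hlx]
    have hla : Real.log a < Real.log x := Real.log_lt_log ha hx
    have : -Real.log a ≤ |Real.log a| := neg_le_abs _
    linarith

lemma my_f1_int {a : ℝ} (ha : 0 < a) :
    IntegrableOn (fun l => Real.log (l / a) * (l * Real.exp (-l))) (Ioi a) := by
  refine my_exp_decay_int (c := 4 * |Real.log a| + 16) ?_ (fun x hx => ?_)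
  · refine ContinuousOn.mul (ContinuousOn.log ?_ (fun x hx => ?_)) (by fun_prop)
    · exact (continuousOn_id.div_const a)
    · exact ne_of_gt (div_pos (ha.trans hx) ha)
  · have hx0 : 0 ≤ x := ha.le.trans (le_of_lt hx)
    have hxa : a < x := hx
    have hw0 : 0 ≤ x * Real.exp (-x) := mul_nonneg hx0 (Real.exp_pos _).le
    have hlog : |Real.log (x / a)| ≤ 2 * |Real.log a| + x := by
      rw [Real.log_div (ne_of_gt (ha.trans hxa)) (ne_of_gt ha)]
      calc |Real.log x - Real.log a| ≤ |Real.log x| + |Real.log a| := abs_sub _ _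
        _ ≤ (|Real.log a| + x) + |Real.log a| := by
            have := my_log_abs_le ha hxa; linarith
        _ = 2 * |Real.log a| + x := by ring
    rw [abs_mul, abs_of_nonneg hw0]
    calc |Real.log (x / a)| * (x * Real.exp (-x))
        ≤ (2 * |Real.log a| + x) * (x * Real.exp (-x)) :=
          mul_le_mul_of_nonneg_right hlog hw0
      _ = 2 * |Real.log a| * (x * Real.exp (-x)) + x^2 * Real.exp (-x) := by ring
      _ ≤ 2 * |Real.log a| * (2 * Real.exp (-(1/2) * x)) + 16 * Real.exp (-(1/2) * x) := by
          have h1 := my_wle hx0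
          have h2 := my_wsq hx0
          have h3 : (0:ℝ) ≤ 2 * |Real.log a| := by positivity
          nlinarith
      _ = (4 * |Real.log a| + 16) * Real.exp (-(1/2) * x) := by ring

/-- Let `R^{ub}(σ, ν) = ∫_{νσ²}^∞ [log(1 + λ/σ²) − log(1 + ν)] λ e^{−λ} dλ`, and suppose that
for each `σ > 0` the parameter `ν(σ) > 0` satisfies the bottleneck constraint
`∫_{ν(σ)σ²}^∞ log(λ/(ν(σ)σ²)) λ e^{−λ} dλ = C_tot` for a fixed `C_tot > 0`.
Then `R^{ub}(σ, ν(σ)) → C_tot` as `σ → 0⁺`. -/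
theorem stmt_6 (Ctot : ℝ) (hC : 0 < Ctot) (ν : ℝ → ℝ)
    (hν : ∀ σ : ℝ, 0 < σ → 0 < ν σ ∧
      (∫ l in Set.Ioi (ν σ * σ ^ 2), Real.log (l / (ν σ * σ ^ 2)) * (l * Real.exp (-l))) = Ctot) :
    Tendsto (fun σ : ℝ =>
        ∫ l in Set.Ioi (ν σ * σ ^ 2),
          (Real.log (1 + l / σ ^ 2) - Real.log (1 + ν σ)) * (l * Real.exp (-l)))
      (nhdsWithin 0 (Set.Ioi 0)) (nhds Ctot) := by
  set a0 : ℝ := Real.exp (-(Ctot * Real.exp 2)) with ha0def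
  have ha0pos : 0 < a0 := Real.exp_pos _
  have ha0lt1 : a0 < 1 := by
    rw [ha0def]
    have h : -(Ctot * Real.exp 2) < 0 := by nlinarith [Real.exp_pos 2]
    calc Real.exp (-(Ctot * Real.exp 2)) < Real.exp 0 := Real.exp_lt_exp.2 h
      _ = 1 := Real.exp_zero
  -- key quantitative bound
  have key : ∀ σ : ℝ, 0 < σ →
      |(∫ l in Set.Ioi (ν σ * σ ^ 2),
          (Real.log (1 + l / σ ^ 2) - Real.log (1 + ν σ)) * (l * Real.exp (-l))) - Ctot|
        ≤ σ ^ 2 / a0 := by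
    intro σ hσ
    obtain ⟨hνpos, hcon⟩ := hν σ hσ
    set a : ℝ := ν σ * σ ^ 2 with hadef
    have hσ2 : (0:ℝ) < σ ^ 2 := by positivity
    have ha : 0 < a := mul_pos hνpos hσ2
    -- lower bound a0 ≤ a
    have haa0 : a0 ≤ a := by
      by_contra hcon2
      push_neg at hcon2
      have ha1 : a < 1 := hcon2.trans ha0lt1
      have hsub : Ioc (1:ℝ) 2 ⊆ Ioi a := fun x hx => lt_trans ha1 hx.1
      have hnonneg : 0 ≤ᵐ[volume.restrict (Ioi a)]
          fun l => Real.log (l / a) * (l * Real.exp (-l)) := by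
        filter_upwards [ae_restrict_mem measurableSet_Ioi] with x hx
        have hx0 : 0 < x := ha.trans hx
        exact mul_nonneg (Real.log_nonneg ((one_le_div ha).2 (le_of_lt hx)))
          (mul_nonneg hx0.le (Real.exp_pos _).le)
      have hstep1 : (∫ l in Ioc (1:ℝ) 2, Real.log (l / a) * (l * Real.exp (-l))) ≤ Ctot := by
        rw [← hcon]
        exact setIntegral_mono_set (my_f1_int ha) hnonneg hsub.eventuallyLE
      have hstep2 : (-Real.log a) * Real.exp (-2)
          ≤ ∫ l in Ioc (1:ℝ) 2, Real.log (l / a) * (l * Real.exp (-l)) := by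
        have hvol : (∫ _l in Ioc (1:ℝ) 2, (-Real.log a) * Real.exp (-2))
            = (-Real.log a) * Real.exp (-2) := by
          rw [setIntegral_const, measureReal_def, Real.volume_Ioc]
          norm_num
        rw [← hvol]
        refine setIntegral_mono_on (integrableOn_const measure_Ioc_lt_top.ne)
          ((my_f1_int ha).mono_set hsub) measurableSet_Ioc (fun x hx => ?_)
        have hx0 : 0 < x := lt_trans zero_lt_one hx.1
        have h1 : -Real.log a ≤ Real.log (x / a) := by
          rw [Real.log_div (ne_of_gt hx0) (ne_of_gt ha)]
          have := Real.log_nonneg hx.1.le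
          linarith
        have h1' : 0 ≤ Real.log (x / a) := by
          refine Real.log_nonneg ((one_le_div ha).2 ?_)
          exact le_trans ha1.le hx.1.le
        have h2 : Real.exp (-2) ≤ x * Real.exp (-x) := by
          calc Real.exp (-2) = 1 * Real.exp (-2) := (one_mul _).symm
            _ ≤ x * Real.exp (-x) :=
              mul_le_mul hx.1.le (Real.exp_le_exp.2 (by linarith [hx.2]))
                (Real.exp_pos _).le hx0.le
        exact mul_le_mul h1 h2 (Real.exp_pos _).le h1'
      have hla : Ctot * Real.exp 2 < -Real.log a := by
        have hlog : Real.log a < Real.log a0 := Real.log_lt_log ha hcon2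
        rw [ha0def, Real.log_exp] at hlog
        linarith
      have hfin : (-Real.log a) * Real.exp (-2) ≤ Ctot := le_trans hstep2 hstep1
      have h5 := mul_lt_mul_of_pos_right hla (Real.exp_pos (-2))
      have h6 : Ctot * Real.exp 2 * Real.exp (-2) = Ctot := by
        rw [mul_assoc, ← Real.exp_add]; norm_num
      linarith
    -- decomposition identity
    have hid : ∀ l ∈ Ioi a,
        (Real.log (1 + l / σ ^ 2) - Real.log (1 + ν σ)) * (l * Real.exp (-l))
          = Real.log (l / a) * (l * Real.exp (-l))
            + (Real.log (1 + σ ^ 2 / l) - Real.log (1 + σ ^ 2 / a)) * (l * Real.exp (-l)) := by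
      intro l hl
      have hl0 : 0 < l := ha.trans hl
      have e1 : Real.log (1 + l / σ ^ 2) = Real.log (σ ^ 2 + l) - Real.log (σ ^ 2) := by
        rw [show 1 + l / σ ^ 2 = (σ ^ 2 + l) / σ ^ 2 by field_simp]
        rw [Real.log_div (by positivity) (by positivity)]
      have e2 : Real.log (1 + ν σ) = Real.log (σ ^ 2 + a) - Real.log (σ ^ 2) := by
        rw [show 1 + ν σ = (σ ^ 2 + a) / σ ^ 2 by rw [hadef]; field_simp]
        rw [Real.log_div (by positivity) (by positivity)]
      have e3 : Real.log (l / a) = Real.log l - Real.log a :=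
        Real.log_div (ne_of_gt hl0) (ne_of_gt ha)
      have e4 : Real.log (1 + σ ^ 2 / l) = Real.log (σ ^ 2 + l) - Real.log l := by
        rw [show 1 + σ ^ 2 / l = (σ ^ 2 + l) / l by field_simp; (try ring)]
        rw [Real.log_div (by positivity) (ne_of_gt hl0)]
      have e5 : Real.log (1 + σ ^ 2 / a) = Real.log (σ ^ 2 + a) - Real.log a := by
        rw [show 1 + σ ^ 2 / a = (σ ^ 2 + a) / a by field_simp; (try ring)]
        rw [Real.log_div (by positivity) (ne_of_gt ha)]
      rw [e1, e2, e3, e4, e5]; ring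
    -- the remainder term and its bound
    have hbnd : ∀ l ∈ Ioi a,
        |(Real.log (1 + σ ^ 2 / l) - Real.log (1 + σ ^ 2 / a)) * (l * Real.exp (-l))|
          ≤ (σ ^ 2 / a) * (l * Real.exp (-l)) := by
      intro l hl
      have hl0 : 0 < l := ha.trans hl
      have hw0 : 0 ≤ l * Real.exp (-l) := mul_nonneg hl0.le (Real.exp_pos _).le
      have hdiv : σ ^ 2 / l ≤ σ ^ 2 / a := by gcongr; exact le_of_lt hl
      have h1 : Real.log (1 + σ ^ 2 / l) ≤ Real.log (1 + σ ^ 2 / a) := by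
        have h1a : (0:ℝ) < 1 + σ ^ 2 / l := by positivity
        exact Real.log_le_log h1a (by linarith)
      have h2 : 0 ≤ Real.log (1 + σ ^ 2 / l) := by
        refine Real.log_nonneg ?_
        have : 0 ≤ σ ^ 2 / l := by positivity
        linarith
      have h3 : Real.log (1 + σ ^ 2 / a) ≤ σ ^ 2 / a := by
        have := Real.log_le_sub_one_of_pos (show (0:ℝ) < 1 + σ ^ 2 / a by positivity)
        linarith
      rw [abs_mul, abs_of_nonneg hw0]
      refine mul_le_mul_of_nonneg_right ?_ hw0
      rw [abs_sub_comm, abs_of_nonneg (by linarith)]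
      linarith
    have hf2cont : ContinuousOn
        (fun l => (Real.log (1 + σ ^ 2 / l) - Real.log (1 + σ ^ 2 / a)) * (l * Real.exp (-l)))
        (Ioi a) := by
      refine ContinuousOn.mul (ContinuousOn.sub (ContinuousOn.log ?_ ?_) continuousOn_const)
        (by fun_prop)
      · exact continuousOn_const.add
          (continuousOn_const.div continuousOn_id (fun x hx => ne_of_gt (ha.trans hx)))
      · intro x hx
        have hx0 : 0 < x := ha.trans hx
        have : (0:ℝ) < 1 + σ ^ 2 / x := by positivity
        exact ne_of_gt this
    have hf2int : IntegrableOn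
        (fun l => (Real.log (1 + σ ^ 2 / l) - Real.log (1 + σ ^ 2 / a)) * (l * Real.exp (-l)))
        (Ioi a) := by
      refine my_exp_decay_int (c := 2 * (σ ^ 2 / a)) hf2cont (fun x hx => ?_)
      have hx0 : 0 ≤ x := ha.le.trans (le_of_lt hx)
      calc |(Real.log (1 + σ ^ 2 / x) - Real.log (1 + σ ^ 2 / a)) * (x * Real.exp (-x))|
          ≤ (σ ^ 2 / a) * (x * Real.exp (-x)) := hbnd x hx
        _ ≤ (σ ^ 2 / a) * (2 * Real.exp (-(1/2) * x)) :=
            mul_le_mul_of_nonneg_left (my_wle hx0) (by positivity)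
        _ = 2 * (σ ^ 2 / a) * Real.exp (-(1/2) * x) := by ring
    have hsplit : (∫ l in Set.Ioi a,
          (Real.log (1 + l / σ ^ 2) - Real.log (1 + ν σ)) * (l * Real.exp (-l)))
        = Ctot + ∫ l in Set.Ioi a,
            (Real.log (1 + σ ^ 2 / l) - Real.log (1 + σ ^ 2 / a)) * (l * Real.exp (-l)) := by
      rw [setIntegral_congr_fun measurableSet_Ioi hid,
        integral_add (my_f1_int ha) hf2int, hcon]
    rw [hsplit, add_sub_cancel_left]
    calc |∫ l in Set.Ioi a,
            (Real.log (1 + σ ^ 2 / l) - Real.log (1 + σ ^ 2 / a)) * (l * Real.exp (-l))|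
        ≤ ∫ l in Set.Ioi a,
            |(Real.log (1 + σ ^ 2 / l) - Real.log (1 + σ ^ 2 / a)) * (l * Real.exp (-l))| := by
          simpa only [Real.norm_eq_abs] using
            norm_integral_le_integral_norm (μ := volume.restrict (Set.Ioi a))
              (fun l => (Real.log (1 + σ ^ 2 / l) - Real.log (1 + σ ^ 2 / a)) * (l * Real.exp (-l)))
      _ ≤ ∫ l in Set.Ioi a, (σ ^ 2 / a) * (l * Real.exp (-l)) :=
          setIntegral_mono_on hf2int.abs ((my_w_int ha.le).const_mul _)
            measurableSet_Ioi hbnd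
      _ = (σ ^ 2 / a) * ∫ l in Set.Ioi a, l * Real.exp (-l) := integral_const_mul _ _
      _ ≤ (σ ^ 2 / a) * 1 := mul_le_mul_of_nonneg_left (my_w_le_one ha.le) (by positivity)
      _ = σ ^ 2 / a := mul_one _
      _ ≤ σ ^ 2 / a0 := by gcongr
  -- conclude via squeeze
  have htend : Tendsto (fun σ : ℝ => σ ^ 2 / a0) (nhdsWithin 0 (Set.Ioi 0)) (nhds 0) := by
    have h : Tendsto (fun σ : ℝ => σ ^ 2 / a0) (nhds 0) (nhds ((0:ℝ) ^ 2 / a0)) :=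
      ((continuous_pow 2).div_const a0).tendsto 0
    simpa using h.mono_left nhdsWithin_le_nhds
  have hg : Tendsto (fun σ : ℝ => Ctot - σ ^ 2 / a0) (nhdsWithin 0 (Set.Ioi 0)) (nhds Ctot) := by
    simpa using (tendsto_const_nhds (x := Ctot) (f := nhdsWithin (0:ℝ) (Set.Ioi 0))).sub htend
  have hh : Tendsto (fun σ : ℝ => Ctot + σ ^ 2 / a0) (nhdsWithin 0 (Set.Ioi 0)) (nhds Ctot) := by
    simpa using (tendsto_const_nhds (x := Ctot) (f := nhdsWithin (0:ℝ) (Set.Ioi 0))).add htend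
  refine tendsto_of_tendsto_of_tendsto_of_le_of_le' hg hh ?_ ?_
  · filter_upwards [self_mem_nhdsWithin] with σ hσ
    have := abs_le.1 (key σ hσ)
    linarith [this.1]
  · filter_upwards [self_mem_nhdsWithin] with σ hσ
    have := abs_le.1 (key σ hσ)
    linarith [this.2]
end

section
/- Let R^{ub}(ν) = ∫_{νσ^2}^∞ [log(1 + λ/σ^2) − log(1 + ν)] · λ e^{−λ} dλ with σ > 0 fixed, and let ν = ν(C_tot) solve ∫_{νσ^2}^∞ log(λ/(νσ^2)) · λ e^{−λ} dλ = C_tot. Then as C_tot → ∞, ν(C_tot) → 0 and R^{ub} converges to ∫_0^∞ log(1 + λ/σ^2) · λ e^{−λ} dλ. -/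
open MeasureTheory Real Set Filter

private lemma int_sq : IntegrableOn (fun l : ℝ => l ^ 2 * Real.exp (-l)) (Ioi 0) := by
  have h := Real.GammaIntegral_convergent (by norm_num : (0:ℝ) < 3)
  refine h.congr_fun (fun x hx => ?_) measurableSet_Ioi
  beta_reduce; rw [show (3:ℝ) - 1 = ((2:ℕ):ℝ) by norm_num, Real.rpow_natCast]
  ring

private lemma int_lin : IntegrableOn (fun l : ℝ => l * Real.exp (-l)) (Ioi 0) := by
  have h := Real.GammaIntegral_convergent (by norm_num : (0:ℝ) < 2)
  refine h.congr_fun (fun x hx => ?_) measurableSet_Ioi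
  beta_reduce; rw [show (2:ℝ) - 1 = (1:ℝ) by norm_num, Real.rpow_one]
  ring

private lemma cont_lin : Continuous (fun l : ℝ => l * Real.exp (-l)) :=
  continuous_id.mul (Real.continuous_exp.comp continuous_neg)

private lemma intOn_log {t : ℝ} (ht : 0 < t) :
    IntegrableOn (fun l : ℝ => Real.log (l / t) * (l * Real.exp (-l))) (Ioi t) := by
  have hmeas : AEStronglyMeasurable (fun l : ℝ => Real.log (l / t) * (l * Real.exp (-l)))
      (volume.restrict (Ioi t)) := by
    refine ContinuousOn.aestronglyMeasurable ?_ measurableSet_Ioi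
    refine ContinuousOn.mul ?_ cont_lin.continuousOn
    refine ContinuousOn.log (continuousOn_id.div_const t) fun x hx => ?_
    exact ne_of_gt (div_pos (ht.trans hx) ht)
  have hint : Integrable (fun l : ℝ => (1 / t) * (l ^ 2 * Real.exp (-l)))
      (volume.restrict (Ioi t)) :=
    ((int_sq.mono_set (Ioi_subset_Ioi ht.le)).const_mul (1 / t))
  refine hint.mono' hmeas ?_
  refine (ae_restrict_iff' measurableSet_Ioi).2 (Filter.Eventually.of_forall fun l hl => ?_)
  have hl0 : 0 < l := ht.trans hl
  have h1 : (1:ℝ) ≤ l / t := (one_le_div ht).2 (le_of_lt hl)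
  have hlog0 : 0 ≤ Real.log (l / t) := Real.log_nonneg h1
  have hlogle : Real.log (l / t) ≤ l / t :=
    (Real.log_le_sub_one_of_pos (by linarith)).trans (by linarith)
  have hle : 0 ≤ l * Real.exp (-l) := mul_nonneg hl0.le (Real.exp_pos _).le
  rw [Real.norm_eq_abs, abs_of_nonneg (mul_nonneg hlog0 hle)]
  calc Real.log (l / t) * (l * Real.exp (-l)) ≤ (l / t) * (l * Real.exp (-l)) :=
        mul_le_mul_of_nonneg_right hlogle hle
    _ = (1 / t) * (l ^ 2 * Real.exp (-l)) := by ring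

private lemma intOn_f1 {σ : ℝ} (hσ : 0 < σ) :
    IntegrableOn (fun l : ℝ => Real.log (1 + l / σ ^ 2) * (l * Real.exp (-l))) (Ioi 0) := by
  have hσ2 : 0 < σ ^ 2 := by positivity
  have hmeas : AEStronglyMeasurable (fun l : ℝ => Real.log (1 + l / σ ^ 2) * (l * Real.exp (-l)))
      (volume.restrict (Ioi 0)) := by
    refine ContinuousOn.aestronglyMeasurable ?_ measurableSet_Ioi
    refine ContinuousOn.mul ?_ cont_lin.continuousOn
    refine ContinuousOn.log (continuousOn_const.add (continuousOn_id.div_const _))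
      fun x hx => ?_
    have : (0:ℝ) < x := hx
    positivity
  have hint : Integrable (fun l : ℝ => (1 / σ ^ 2) * (l ^ 2 * Real.exp (-l)))
      (volume.restrict (Ioi 0)) := int_sq.const_mul _
  refine hint.mono' hmeas ?_
  refine (ae_restrict_iff' measurableSet_Ioi).2 (Filter.Eventually.of_forall fun l hl => ?_)
  have hl0 : (0:ℝ) < l := hl
  have hd : 0 < l / σ ^ 2 := div_pos hl0 hσ2
  have hlog0 : 0 ≤ Real.log (1 + l / σ ^ 2) := Real.log_nonneg (by linarith)
  have hlogle : Real.log (1 + l / σ ^ 2) ≤ l / σ ^ 2 :=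
    (Real.log_le_sub_one_of_pos (by linarith)).trans (by linarith)
  have hle : 0 ≤ l * Real.exp (-l) := mul_nonneg hl0.le (Real.exp_pos _).le
  rw [Real.norm_eq_abs, abs_of_nonneg (mul_nonneg hlog0 hle)]
  calc Real.log (1 + l / σ ^ 2) * (l * Real.exp (-l)) ≤ (l / σ ^ 2) * (l * Real.exp (-l)) :=
        mul_le_mul_of_nonneg_right hlogle hle
    _ = (1 / σ ^ 2) * (l ^ 2 * Real.exp (-l)) := by ring

private lemma G_anti {s t : ℝ} (hs : 0 < s) (hst : s ≤ t) :
    (∫ l in Ioi t, Real.log (l / t) * (l * Real.exp (-l))) ≤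
      ∫ l in Ioi s, Real.log (l / s) * (l * Real.exp (-l)) := by
  have ht : 0 < t := hs.trans_le hst
  calc (∫ l in Ioi t, Real.log (l / t) * (l * Real.exp (-l)))
      ≤ ∫ l in Ioi t, Real.log (l / s) * (l * Real.exp (-l)) := by
        refine setIntegral_mono_on (intOn_log ht) ((intOn_log hs).mono_set (Ioi_subset_Ioi hst))
          measurableSet_Ioi fun l hl => ?_
        have hl0 : 0 < l := ht.trans hl
        refine mul_le_mul_of_nonneg_right ?_ (mul_nonneg hl0.le (Real.exp_pos _).le)
        exact Real.log_le_log (div_pos hl0 ht) (div_le_div_of_nonneg_left hl0.le hs hst)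
    _ ≤ ∫ l in Ioi s, Real.log (l / s) * (l * Real.exp (-l)) := by
        refine setIntegral_mono_set (intOn_log hs) ?_ (HasSubset.Subset.eventuallyLE
          (Ioi_subset_Ioi hst))
        refine (ae_restrict_iff' measurableSet_Ioi).2 (Filter.Eventually.of_forall fun l hl => ?_)
        have hl0 : 0 < l := hs.trans hl
        exact mul_nonneg (Real.log_nonneg ((one_le_div hs).2 hl.le))
          (mul_nonneg hl0.le (Real.exp_pos _).le)

/-- Let `R^{ub}(ν) = ∫_{νσ²}^∞ [log(1 + λ/σ²) − log(1 + ν)] λ e^{−λ} dλ` with `σ > 0` fixed,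
and let `ν(C_tot) > 0` solve `∫_{νσ²}^∞ log(λ/(νσ²)) λ e^{−λ} dλ = C_tot`. Then, as
`C_tot → ∞`, `ν(C_tot) → 0` and `R^{ub}(ν(C_tot))` converges to
`∫_0^∞ log(1 + λ/σ²) λ e^{−λ} dλ`. -/
theorem stmt_7 (σ : ℝ) (hσ : 0 < σ) (ν : ℝ → ℝ)
    (hν : ∀ Ctot : ℝ, 0 < Ctot → 0 < ν Ctot ∧
      (∫ l in Set.Ioi (ν Ctot * σ ^ 2),
        Real.log (l / (ν Ctot * σ ^ 2)) * (l * Real.exp (-l))) = Ctot) :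
    Tendsto ν atTop (nhds 0) ∧
    Tendsto (fun Ctot : ℝ =>
        ∫ l in Set.Ioi (ν Ctot * σ ^ 2),
          (Real.log (1 + l / σ ^ 2) - Real.log (1 + ν Ctot)) * (l * Real.exp (-l)))
      atTop (nhds (∫ l in Set.Ioi (0 : ℝ), Real.log (1 + l / σ ^ 2) * (l * Real.exp (-l)))) := by
  have hσ2 : 0 < σ ^ 2 := by positivity
  -- Step 1: ν → 0
  have step1 : Tendsto ν atTop (nhds 0) := by
    rw [tendsto_order]
    constructor
    · intro b hb
      filter_upwards [eventually_gt_atTop (0:ℝ)] with C hC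
      exact lt_trans hb (hν C hC).1
    · intro b hb
      set M := ∫ l in Ioi (b * σ ^ 2), Real.log (l / (b * σ ^ 2)) * (l * Real.exp (-l))
      filter_upwards [eventually_gt_atTop (max M 0)] with C hC
      have hC0 : 0 < C := lt_of_le_of_lt (le_max_right _ _) hC
      obtain ⟨hν0, hG⟩ := hν C hC0
      by_contra hcon
      push_neg at hcon
      have hbs : 0 < b * σ ^ 2 := mul_pos hb hσ2
      have : C ≤ M := by
        rw [← hG]
        exact G_anti hbs (mul_le_mul_of_nonneg_right hcon hσ2.le)
      exact absurd (lt_of_le_of_lt this (lt_of_le_of_lt (le_max_left _ _) hC)) (lt_irrefl _)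
  refine ⟨step1, ?_⟩
  -- notation
  set f1 : ℝ → ℝ := fun l => Real.log (1 + l / σ ^ 2) * (l * Real.exp (-l)) with hf1
  set g : ℝ → ℝ := fun l => l * Real.exp (-l) with hg
  set L : ℝ := ∫ l in Ioi (0:ℝ), f1 l with hL
  have ha0 : Tendsto (fun C => ν C * σ ^ 2) atTop (nhds 0) := by
    have := step1.mul_const (σ ^ 2)
    rwa [zero_mul] at this
  have hgnneg : ∀ l ∈ Ioi (0:ℝ), 0 ≤ g l := fun l hl =>
    mul_nonneg (le_of_lt hl) (Real.exp_pos _).le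
  -- integral splitting, eventually
  have hsplit : ∀ᶠ C in atTop,
      (∫ l in Ioi (ν C * σ ^ 2), (Real.log (1 + l / σ ^ 2) - Real.log (1 + ν C)) * g l)
      = (∫ l in Ioi (ν C * σ ^ 2), f1 l) - Real.log (1 + ν C) * ∫ l in Ioi (ν C * σ ^ 2), g l := by
    filter_upwards [eventually_gt_atTop (0:ℝ)] with C hC
    have hν0 := (hν C hC).1
    have ha : 0 < ν C * σ ^ 2 := mul_pos hν0 hσ2
    have hsub : Ioi (ν C * σ ^ 2) ⊆ Ioi 0 := Ioi_subset_Ioi ha.le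
    have hi1 : IntegrableOn f1 (Ioi (ν C * σ ^ 2)) := (intOn_f1 hσ).mono_set hsub
    have hi2 : IntegrableOn (fun l => Real.log (1 + ν C) * g l) (Ioi (ν C * σ ^ 2)) :=
      (int_lin.mono_set hsub).const_mul _
    have : (fun l => (Real.log (1 + l / σ ^ 2) - Real.log (1 + ν C)) * g l)
        = fun l => f1 l - Real.log (1 + ν C) * g l := by
      funext l; simp only [hf1, hg]; ring
    rw [this, integral_sub hi1 hi2, integral_const_mul _ _]
  -- Term 2 : → 0
  have hterm2 : Tendsto (fun C => Real.log (1 + ν C) * ∫ l in Ioi (ν C * σ ^ 2), g l)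
      atTop (nhds 0) := by
    have hlogto : Tendsto (fun C => Real.log (1 + ν C)) atTop (nhds 0) := by
      have h1 : Tendsto (fun C => 1 + ν C) atTop (nhds 1) := by
        have := step1.const_add (1:ℝ); simpa using this
      have := (Real.continuousAt_log (by norm_num : (1:ℝ) ≠ 0)).tendsto.comp h1
      simpa [Function.comp_def] using this
    set K : ℝ := ∫ l in Ioi (0:ℝ), g l with hK
    have hup : Tendsto (fun C => Real.log (1 + ν C) * K) atTop (nhds 0) := by
      have := hlogto.mul_const K; rwa [zero_mul] at this
    refine tendsto_of_tendsto_of_tendsto_of_le_of_le' (g := fun _ => (0:ℝ)) tendsto_const_nhds hup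
      ?_ ?_
    · filter_upwards [eventually_gt_atTop (0:ℝ)] with C hC
      have hν0 := (hν C hC).1
      have ha : 0 < ν C * σ ^ 2 := mul_pos hν0 hσ2
      refine mul_nonneg (Real.log_nonneg (by linarith)) ?_
      exact setIntegral_nonneg measurableSet_Ioi fun l hl =>
        mul_nonneg (le_of_lt (ha.trans hl)) (Real.exp_pos _).le
    · filter_upwards [eventually_gt_atTop (0:ℝ)] with C hC
      have hν0 := (hν C hC).1
      have ha : 0 < ν C * σ ^ 2 := mul_pos hν0 hσ2
      refine mul_le_mul_of_nonneg_left ?_ (Real.log_nonneg (by linarith))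
      refine setIntegral_mono_set int_lin ?_
        (HasSubset.Subset.eventuallyLE (Ioi_subset_Ioi ha.le))
      exact (ae_restrict_iff' measurableSet_Ioi).2 (Filter.Eventually.of_forall fun l hl =>
        mul_nonneg (le_of_lt hl) (Real.exp_pos _).le)
  -- Term 1 : → L
  have hterm1 : Tendsto (fun C => ∫ l in Ioi (ν C * σ ^ 2), f1 l) atTop (nhds L) := by
    have hlow : Tendsto (fun C => L - (ν C * σ ^ 2) ^ 3 / σ ^ 2) atTop (nhds L) := by
      have h3 : Tendsto (fun C => (ν C * σ ^ 2) ^ 3 / σ ^ 2) atTop (nhds 0) := by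
        have := ((ha0.pow 3).div_const (σ ^ 2))
        simpa using this
      have := (tendsto_const_nhds (x := L) (f := atTop)).sub h3
      simpa using this
    refine tendsto_of_tendsto_of_tendsto_of_le_of_le' hlow tendsto_const_nhds ?_ ?_
    · -- lower bound
      filter_upwards [eventually_gt_atTop (0:ℝ)] with C hC
      have hν0 := (hν C hC).1
      set a := ν C * σ ^ 2 with hadef
      have ha : 0 < a := mul_pos hν0 hσ2
      have hdecomp : L = (∫ l in Ioc 0 a, f1 l) + ∫ l in Ioi a, f1 l := by
        rw [hL, ← Ioc_union_Ioi_eq_Ioi ha.le,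
          setIntegral_union Ioc_disjoint_Ioi_same measurableSet_Ioi
            ((intOn_f1 hσ).mono_set (Ioc_subset_Ioi_self.trans (Ioi_subset_Ioi le_rfl)))
            ((intOn_f1 hσ).mono_set (Ioi_subset_Ioi ha.le))]
      have hIoc : (∫ l in Ioc 0 a, f1 l) ≤ a ^ 3 / σ ^ 2 := by
        have hconst : (∫ l in Ioc (0:ℝ) a, a ^ 2 / σ ^ 2) = a ^ 3 / σ ^ 2 := by
          rw [setIntegral_const, measureReal_def, Real.volume_Ioc, ENNReal.toReal_ofReal (by linarith)]
          rw [smul_eq_mul]; ring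
        rw [← hconst]
        refine setIntegral_mono_on
          ((intOn_f1 hσ).mono_set (Ioc_subset_Ioi_self)) (integrableOn_const ?_)
          measurableSet_Ioc fun l hl => ?_
        · rw [Real.volume_Ioc]; exact ENNReal.ofReal_ne_top
        · obtain ⟨hl0, hla⟩ := hl
          have hexp : Real.exp (-l) ≤ 1 := Real.exp_le_one_iff.2 (by linarith)
          have hlog : Real.log (1 + l / σ ^ 2) ≤ l / σ ^ 2 :=
            (Real.log_le_sub_one_of_pos (by positivity)).trans (by linarith)
          have hlognn : 0 ≤ Real.log (1 + l / σ ^ 2) :=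
            Real.log_nonneg (by nlinarith [div_pos hl0 hσ2])
          calc f1 l ≤ (l / σ ^ 2) * (l * Real.exp (-l)) :=
                mul_le_mul_of_nonneg_right hlog (mul_nonneg hl0.le (Real.exp_pos _).le)
            _ ≤ (a / σ ^ 2) * (a * 1) := by
                refine mul_le_mul (by gcongr) ?_ ?_ (by positivity)
                · exact mul_le_mul hla hexp (Real.exp_pos _).le (hl0.le.trans hla)
                · exact mul_nonneg hl0.le (Real.exp_pos _).le
            _ = a ^ 2 / σ ^ 2 := by ring
      linarith [hdecomp]
    · -- upper bound
      filter_upwards [eventually_gt_atTop (0:ℝ)] with C hC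
      have hν0 := (hν C hC).1
      have ha : 0 < ν C * σ ^ 2 := mul_pos hν0 hσ2
      refine setIntegral_mono_set (intOn_f1 hσ) ?_
        (HasSubset.Subset.eventuallyLE (Ioi_subset_Ioi ha.le))
      refine (ae_restrict_iff' measurableSet_Ioi).2 (Filter.Eventually.of_forall fun l hl => ?_)
      have hl0 : (0:ℝ) < l := hl
      exact mul_nonneg (Real.log_nonneg (by nlinarith [div_pos hl0 hσ2]))
        (mul_nonneg hl0.le (Real.exp_pos _).le)
  have := (hterm1.sub hterm2)
  rw [sub_zero] at this
  exact Tendsto.congr' (hsplit.mono fun C h => h.symm) this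
end

section
/- For fixed ρ_1, ρ_2 ≥ 0, the function (C_1, C_2) ↦ R(ρ_K, C_K) = max_{r ≥ 0} min_{T ⊆ {1,2}} { log[1 + Σ_{k∈T^c} ρ_k(1 − 2^{−r_k})] + Σ_{k∈T}(C_k − r_k) } is concave and nondecreasing in (C_1, C_2). -/
open Real Set

/-- The min over the four cut subsets `T ⊆ {1,2}` of
`log(1 + Σ_{k∈T^c} ρ_k(1 − 2^{−r_k})) + Σ_{k∈T}(C_k − r_k)` (logs in base 2). -/
noncomputable def cutMin (ρ1 ρ2 C1 C2 r1 r2 : ℝ) : ℝ :=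
  min
    (min (Real.logb 2 (1 + ρ1 * (1 - (2:ℝ) ^ (-r1)) + ρ2 * (1 - (2:ℝ) ^ (-r2))))
         (Real.logb 2 (1 + ρ2 * (1 - (2:ℝ) ^ (-r2))) + (C1 - r1)))
    (min (Real.logb 2 (1 + ρ1 * (1 - (2:ℝ) ^ (-r1))) + (C2 - r2))
         ((C1 - r1) + (C2 - r2)))

/-- The sum-rate `R(ρ_K, C_K) = max_{r ≥ 0} min_{T ⊆ {1,2}} {…}`. -/
noncomputable def sumRate (ρ1 ρ2 C1 C2 : ℝ) : ℝ :=
  sSup {v : ℝ | ∃ r1 r2 : ℝ, 0 ≤ r1 ∧ 0 ≤ r2 ∧ v = cutMin ρ1 ρ2 C1 C2 r1 r2}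

/- Auxiliary lemmas -/

lemma e_nonneg {r : ℝ} (hr : 0 ≤ r) : 0 ≤ 1 - (2:ℝ) ^ (-r) := by
  have : (2:ℝ) ^ (-r) ≤ 1 :=
    Real.rpow_le_one_of_one_le_of_nonpos one_le_two (by linarith)
  linarith

lemma e_le_one {r : ℝ} : 1 - (2:ℝ) ^ (-r) ≤ 1 := by
  have : (0:ℝ) < (2:ℝ) ^ (-r) := Real.rpow_pos_of_pos two_pos _
  linarith

/-- convexity of `2 ^ (-r)` -/
lemma two_rpow_convex {u v a b : ℝ} (ha : 0 ≤ a) (hb : 0 ≤ b) (hab : a + b = 1) :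
    (2:ℝ) ^ (-(a * u + b * v)) ≤ a * (2:ℝ) ^ (-u) + b * (2:ℝ) ^ (-v) := by
  have h2 : (0:ℝ) < 2 := two_pos
  rw [Real.rpow_def_of_pos h2, Real.rpow_def_of_pos h2, Real.rpow_def_of_pos h2]
  have := convexOn_exp.2 (Set.mem_univ (Real.log 2 * (-u))) (Set.mem_univ (Real.log 2 * (-v)))
    ha hb hab
  simp only [smul_eq_mul] at this
  calc Real.exp (Real.log 2 * -(a * u + b * v))
      = Real.exp (a * (Real.log 2 * (-u)) + b * (Real.log 2 * (-v))) := by ring_nf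
    _ ≤ a * Real.exp (Real.log 2 * (-u)) + b * Real.exp (Real.log 2 * (-v)) := this

/-- concavity of `logb 2` on `[1, ∞)` (midpoints) -/
lemma logb_concave_pt {u v a b : ℝ} (hu : 1 ≤ u) (hv : 1 ≤ v)
    (ha : 0 ≤ a) (hb : 0 ≤ b) (hab : a + b = 1) :
    a * Real.logb 2 u + b * Real.logb 2 v ≤ Real.logb 2 (a * u + b * v) := by
  have hu0 : (0:ℝ) < u := by linarith
  have hv0 : (0:ℝ) < v := by linarith
  have hlog := strictConcaveOn_log_Ioi.concaveOn.2 (Set.mem_Ioi.mpr hu0)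
    (Set.mem_Ioi.mpr hv0) ha hb hab
  simp only [smul_eq_mul] at hlog
  have hl2 : (0:ℝ) < Real.log 2 := Real.log_pos one_lt_two
  unfold Real.logb
  calc a * (Real.log u / Real.log 2) + b * (Real.log v / Real.log 2)
      = (a * Real.log u + b * Real.log v) / Real.log 2 := by ring
    _ ≤ Real.log (a * u + b * v) / Real.log 2 := by gcongr

/-- the log-term in a single variable pair: joint concavity along nonneg combinations -/
lemma logterm_concave {ρ1 ρ2 u1 u2 v1 v2 a b : ℝ}
    (hρ1 : 0 ≤ ρ1) (hρ2 : 0 ≤ ρ2)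
    (hu1 : 0 ≤ u1) (hu2 : 0 ≤ u2) (hv1 : 0 ≤ v1) (hv2 : 0 ≤ v2)
    (ha : 0 ≤ a) (hb : 0 ≤ b) (hab : a + b = 1) :
    a * Real.logb 2 (1 + ρ1 * (1 - (2:ℝ) ^ (-u1)) + ρ2 * (1 - (2:ℝ) ^ (-u2)))
      + b * Real.logb 2 (1 + ρ1 * (1 - (2:ℝ) ^ (-v1)) + ρ2 * (1 - (2:ℝ) ^ (-v2)))
    ≤ Real.logb 2 (1 + ρ1 * (1 - (2:ℝ) ^ (-(a * u1 + b * v1)))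
        + ρ2 * (1 - (2:ℝ) ^ (-(a * u2 + b * v2)))) := by
  set su : ℝ := 1 + ρ1 * (1 - (2:ℝ) ^ (-u1)) + ρ2 * (1 - (2:ℝ) ^ (-u2)) with hsu
  set sv : ℝ := 1 + ρ1 * (1 - (2:ℝ) ^ (-v1)) + ρ2 * (1 - (2:ℝ) ^ (-v2)) with hsv
  set sz : ℝ := 1 + ρ1 * (1 - (2:ℝ) ^ (-(a * u1 + b * v1)))
      + ρ2 * (1 - (2:ℝ) ^ (-(a * u2 + b * v2))) with hsz
  have hsu1 : 1 ≤ su := by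
    have h1 := mul_nonneg hρ1 (e_nonneg hu1)
    have h2 := mul_nonneg hρ2 (e_nonneg hu2)
    simp only [hsu]; linarith
  have hsv1 : 1 ≤ sv := by
    have h1 := mul_nonneg hρ1 (e_nonneg hv1)
    have h2 := mul_nonneg hρ2 (e_nonneg hv2)
    simp only [hsv]; linarith
  have hcomb : a * su + b * sv ≤ sz := by
    have h1 := two_rpow_convex (u := u1) (v := v1) ha hb hab
    have h2 := two_rpow_convex (u := u2) (v := v2) ha hb hab
    have h1' := mul_le_mul_of_nonneg_left h1 hρ1
    have h2' := mul_le_mul_of_nonneg_left h2 hρ2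
    simp only [hsu, hsv, hsz]
    nlinarith [h1', h2']
  have hpos : (0:ℝ) < a * su + b * sv := by nlinarith
  calc a * Real.logb 2 su + b * Real.logb 2 sv
      ≤ Real.logb 2 (a * su + b * sv) := logb_concave_pt hsu1 hsv1 ha hb hab
    _ ≤ Real.logb 2 sz := Real.logb_le_logb_of_le one_lt_two hpos hcomb

/-- same for a single-ρ log term -/
lemma logterm_concave1 {ρ u v a b : ℝ} (hρ : 0 ≤ ρ)
    (hu : 0 ≤ u) (hv : 0 ≤ v) (ha : 0 ≤ a) (hb : 0 ≤ b) (hab : a + b = 1) :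
    a * Real.logb 2 (1 + ρ * (1 - (2:ℝ) ^ (-u)))
      + b * Real.logb 2 (1 + ρ * (1 - (2:ℝ) ^ (-v)))
    ≤ Real.logb 2 (1 + ρ * (1 - (2:ℝ) ^ (-(a * u + b * v)))) := by
  have := logterm_concave (ρ1 := ρ) (ρ2 := 0) (u1 := u) (u2 := u) (v1 := v) (v2 := v)
    hρ le_rfl hu hu hv hv ha hb hab
  simpa using this

/-- joint concavity of `cutMin` in `(C, r)` -/
lemma cutMin_concave {ρ1 ρ2 x1 x2 y1 y2 u1 u2 v1 v2 a b : ℝ}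
    (hρ1 : 0 ≤ ρ1) (hρ2 : 0 ≤ ρ2)
    (hu1 : 0 ≤ u1) (hu2 : 0 ≤ u2) (hv1 : 0 ≤ v1) (hv2 : 0 ≤ v2)
    (ha : 0 ≤ a) (hb : 0 ≤ b) (hab : a + b = 1) :
    a * cutMin ρ1 ρ2 x1 x2 u1 u2 + b * cutMin ρ1 ρ2 y1 y2 v1 v2
      ≤ cutMin ρ1 ρ2 (a * x1 + b * y1) (a * x2 + b * y2)
          (a * u1 + b * v1) (a * u2 + b * v2) := by
  have hA := logterm_concave (ρ1 := ρ1) (ρ2 := ρ2) hρ1 hρ2 hu1 hu2 hv1 hv2 ha hb hab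
  have hB := logterm_concave1 (ρ := ρ2) hρ2 hu2 hv2 ha hb hab
  have hC := logterm_concave1 (ρ := ρ1) hρ1 hu1 hv1 ha hb hab
  unfold cutMin
  have m1 : ∀ p q : ℝ, a * min p q ≤ a * p ∧ a * min p q ≤ a * q := fun p q =>
    ⟨mul_le_mul_of_nonneg_left (min_le_left _ _) ha,
     mul_le_mul_of_nonneg_left (min_le_right _ _) ha⟩
  have m2 : ∀ p q : ℝ, b * min p q ≤ b * p ∧ b * min p q ≤ b * q := fun p q =>
    ⟨mul_le_mul_of_nonneg_left (min_le_left _ _) hb,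
     mul_le_mul_of_nonneg_left (min_le_right _ _) hb⟩
  apply le_min
  · apply le_min
    · calc a * cutMin ρ1 ρ2 x1 x2 u1 u2 + b * cutMin ρ1 ρ2 y1 y2 v1 v2
          ≤ a * Real.logb 2 (1 + ρ1 * (1 - (2:ℝ) ^ (-u1)) + ρ2 * (1 - (2:ℝ) ^ (-u2)))
            + b * Real.logb 2 (1 + ρ1 * (1 - (2:ℝ) ^ (-v1)) + ρ2 * (1 - (2:ℝ) ^ (-v2))) := by
            unfold cutMin
            have h1 : cutMin ρ1 ρ2 x1 x2 u1 u2 ≤ _ := min_le_left _ _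
            gcongr <;> exact (min_le_left _ _).trans (min_le_left _ _)
        _ ≤ _ := hA
    · calc a * cutMin ρ1 ρ2 x1 x2 u1 u2 + b * cutMin ρ1 ρ2 y1 y2 v1 v2
          ≤ a * (Real.logb 2 (1 + ρ2 * (1 - (2:ℝ) ^ (-u2))) + (x1 - u1))
            + b * (Real.logb 2 (1 + ρ2 * (1 - (2:ℝ) ^ (-v2))) + (y1 - v1)) := by
            gcongr <;> exact (min_le_left _ _).trans (min_le_right _ _)
        _ ≤ _ := by nlinarith [hB]
  · apply le_min
    · calc a * cutMin ρ1 ρ2 x1 x2 u1 u2 + b * cutMin ρ1 ρ2 y1 y2 v1 v2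
          ≤ a * (Real.logb 2 (1 + ρ1 * (1 - (2:ℝ) ^ (-u1))) + (x2 - u2))
            + b * (Real.logb 2 (1 + ρ1 * (1 - (2:ℝ) ^ (-v1))) + (y2 - v2)) := by
            gcongr <;> exact (min_le_right _ _).trans (min_le_left _ _)
        _ ≤ _ := by nlinarith [hC]
    · calc a * cutMin ρ1 ρ2 x1 x2 u1 u2 + b * cutMin ρ1 ρ2 y1 y2 v1 v2
          ≤ a * ((x1 - u1) + (x2 - u2)) + b * ((y1 - v1) + (y2 - v2)) := by
            gcongr <;> exact (min_le_right _ _).trans (min_le_right _ _)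
        _ ≤ _ := by nlinarith

/-- `cutMin` is monotone in `(C1, C2)` -/
lemma cutMin_mono {ρ1 ρ2 C1 C2 C1' C2' r1 r2 : ℝ} (h1 : C1 ≤ C1') (h2 : C2 ≤ C2') :
    cutMin ρ1 ρ2 C1 C2 r1 r2 ≤ cutMin ρ1 ρ2 C1' C2' r1 r2 := by
  unfold cutMin
  gcongr

/-- upper bound for `cutMin`, uniform in `(C, r)` for `r ≥ 0` -/
lemma cutMin_le {ρ1 ρ2 C1 C2 r1 r2 : ℝ} (hρ1 : 0 ≤ ρ1) (hρ2 : 0 ≤ ρ2)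
    (hr1 : 0 ≤ r1) (hr2 : 0 ≤ r2) :
    cutMin ρ1 ρ2 C1 C2 r1 r2 ≤ Real.logb 2 (1 + ρ1 + ρ2) := by
  have h1 := e_nonneg hr1
  have h2 := e_nonneg hr2
  have h1' : ρ1 * (1 - (2:ℝ) ^ (-r1)) ≤ ρ1 := by nlinarith [e_le_one (r := r1)]
  have h2' : ρ2 * (1 - (2:ℝ) ^ (-r2)) ≤ ρ2 := by nlinarith [e_le_one (r := r2)]
  have harg : 1 + ρ1 * (1 - (2:ℝ) ^ (-r1)) + ρ2 * (1 - (2:ℝ) ^ (-r2)) ≤ 1 + ρ1 + ρ2 := by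
    linarith
  have hpos : (0:ℝ) < 1 + ρ1 * (1 - (2:ℝ) ^ (-r1)) + ρ2 * (1 - (2:ℝ) ^ (-r2)) := by
    nlinarith [mul_nonneg hρ1 h1, mul_nonneg hρ2 h2]
  calc cutMin ρ1 ρ2 C1 C2 r1 r2
      ≤ Real.logb 2 (1 + ρ1 * (1 - (2:ℝ) ^ (-r1)) + ρ2 * (1 - (2:ℝ) ^ (-r2))) :=
        (min_le_left _ _).trans (min_le_left _ _)
    _ ≤ Real.logb 2 (1 + ρ1 + ρ2) := Real.logb_le_logb_of_le one_lt_two hpos harg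

lemma sumRate_bdd {ρ1 ρ2 C1 C2 : ℝ} (hρ1 : 0 ≤ ρ1) (hρ2 : 0 ≤ ρ2) :
    BddAbove {v : ℝ | ∃ r1 r2 : ℝ, 0 ≤ r1 ∧ 0 ≤ r2 ∧ v = cutMin ρ1 ρ2 C1 C2 r1 r2} := by
  refine ⟨Real.logb 2 (1 + ρ1 + ρ2), ?_⟩
  rintro v ⟨r1, r2, hr1, hr2, rfl⟩
  exact cutMin_le hρ1 hρ2 hr1 hr2

lemma sumRate_nonempty {ρ1 ρ2 C1 C2 : ℝ} :
    Set.Nonempty {v : ℝ | ∃ r1 r2 : ℝ, 0 ≤ r1 ∧ 0 ≤ r2 ∧ v = cutMin ρ1 ρ2 C1 C2 r1 r2} :=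
  ⟨cutMin ρ1 ρ2 C1 C2 0 0, 0, 0, le_rfl, le_rfl, rfl⟩

/-- For fixed `ρ_1, ρ_2 ≥ 0`, the map `(C_1, C_2) ↦ R(ρ_K, C_K)` is concave and
nondecreasing on the nonnegative quadrant. -/
theorem stmt_10 (ρ1 ρ2 : ℝ) (hρ1 : 0 ≤ ρ1) (hρ2 : 0 ≤ ρ2) :
    ConcaveOn ℝ {p : ℝ × ℝ | 0 ≤ p.1 ∧ 0 ≤ p.2}
      (fun p : ℝ × ℝ => sumRate ρ1 ρ2 p.1 p.2) ∧
    MonotoneOn (fun p : ℝ × ℝ => sumRate ρ1 ρ2 p.1 p.2)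
      {p : ℝ × ℝ | 0 ≤ p.1 ∧ 0 ≤ p.2} := by
  constructor
  · constructor
    · intro p hp q hq a b ha hb hab
      constructor <;> simp only [Set.mem_setOf_eq] at *
      · have := hp.1; have := hq.1
        simp only [Prod.fst_add, Prod.smul_fst, smul_eq_mul]
        positivity
      · have := hp.2; have := hq.2
        simp only [Prod.snd_add, Prod.smul_snd, smul_eq_mul]
        positivity
    · intro p hp q hq a b ha hb hab
      simp only [smul_eq_mul, Prod.fst_add, Prod.snd_add, Prod.smul_fst, Prod.smul_snd]
      rcases eq_or_lt_of_le ha with rfl | ha'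
      · simp only [zero_add] at hab; subst hab; simp
      rcases eq_or_lt_of_le hb with rfl | hb'
      · simp only [add_zero] at hab; subst hab; simp
      -- a, b > 0
      set Sc := {v : ℝ | ∃ r1 r2 : ℝ, 0 ≤ r1 ∧ 0 ≤ r2 ∧
        v = cutMin ρ1 ρ2 (a * p.1 + b * q.1) (a * p.2 + b * q.2) r1 r2} with hSc
      have hbdd : BddAbove Sc := sumRate_bdd hρ1 hρ2
      have key : ∀ v ∈ {v : ℝ | ∃ r1 r2 : ℝ, 0 ≤ r1 ∧ 0 ≤ r2 ∧
            v = cutMin ρ1 ρ2 p.1 p.2 r1 r2},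
          ∀ w ∈ {v : ℝ | ∃ r1 r2 : ℝ, 0 ≤ r1 ∧ 0 ≤ r2 ∧
            v = cutMin ρ1 ρ2 q.1 q.2 r1 r2},
          a * v + b * w ≤ sSup Sc := by
        rintro v ⟨u1, u2, hu1, hu2, rfl⟩ w ⟨v1, v2, hv1, hv2, rfl⟩
        have hmem : cutMin ρ1 ρ2 (a * p.1 + b * q.1) (a * p.2 + b * q.2)
            (a * u1 + b * v1) (a * u2 + b * v2) ∈ Sc := by
          exact ⟨a * u1 + b * v1, a * u2 + b * v2,
            by positivity, by positivity, rfl⟩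
        calc a * cutMin ρ1 ρ2 p.1 p.2 u1 u2 + b * cutMin ρ1 ρ2 q.1 q.2 v1 v2
            ≤ cutMin ρ1 ρ2 (a * p.1 + b * q.1) (a * p.2 + b * q.2)
                (a * u1 + b * v1) (a * u2 + b * v2) :=
              cutMin_concave hρ1 hρ2 hu1 hu2 hv1 hv2 ha hb hab
          _ ≤ sSup Sc := le_csSup hbdd hmem
      unfold sumRate
      have h1 : sSup {v : ℝ | ∃ r1 r2 : ℝ, 0 ≤ r1 ∧ 0 ≤ r2 ∧
          v = cutMin ρ1 ρ2 p.1 p.2 r1 r2} ≤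
          (sSup Sc - b * sSup {v : ℝ | ∃ r1 r2 : ℝ, 0 ≤ r1 ∧ 0 ≤ r2 ∧
            v = cutMin ρ1 ρ2 q.1 q.2 r1 r2}) / a := by
        apply csSup_le sumRate_nonempty
        intro v hv
        rw [le_div_iff₀ ha']
        have h2 : sSup {v : ℝ | ∃ r1 r2 : ℝ, 0 ≤ r1 ∧ 0 ≤ r2 ∧
            v = cutMin ρ1 ρ2 q.1 q.2 r1 r2} ≤ (sSup Sc - a * v) / b := by
          apply csSup_le sumRate_nonempty
          intro w hw
          rw [le_div_iff₀ hb']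
          have := key v hv w hw
          linarith
        rw [le_div_iff₀ hb'] at h2
        nlinarith [h2]
      rw [le_div_iff₀ ha'] at h1
      nlinarith [h1]
  · rintro p hp q hq hpq
    simp only
    apply csSup_le sumRate_nonempty
    rintro v ⟨r1, r2, hr1, hr2, rfl⟩
    have : cutMin ρ1 ρ2 p.1 p.2 r1 r2 ≤ cutMin ρ1 ρ2 q.1 q.2 r1 r2 :=
      cutMin_mono hpq.1 hpq.2
    exact this.trans (le_csSup (sumRate_bdd hρ1 hρ2) ⟨r1, r2, hr1, hr2, rfl⟩)
end
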